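/- Assume [L:F_q] is odd, and let φ and ψ be ordinary rank-2 Drinfeld F_q[X]-modules over L whose characteristic polynomials of the Frobenius endomorphism define smooth affine plane curves over F_q. Then φ and ψ are L-isomorphic if and only if they are L-isogenous (there exists an isogeny φ → ψ in L{τ}) and L̄-isomorphic. -/

import Mathlib

open Polynomial Finset

noncomputable section

variable (Fq : Type) [Field Fq] [Fintype Fq]

/-- The Frobenius `x ↦ x^q` as an `Fq`-linear endomorphism of an `Fq`-algebra field `M`
(of the same characteristic, which is automatic since `Fq → M` is injective). -/
def drinTau (M : Type) [Field M] [Algebra Fq M] : Module.End Fq M where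
  toFun x := x ^ Fintype.card Fq
  map_add' x y := by
    obtain ⟨n, hp, hcard⟩ := FiniteField.card Fq (ringChar Fq)
    haveI : Fact (Nat.Prime (ringChar Fq)) := ⟨hp⟩
    haveI : CharP M (ringChar Fq) :=
      charP_of_injective_algebraMap (algebraMap Fq M).injective (ringChar Fq)
    rw [hcard]
    exact add_pow_char_pow x y (ringChar Fq) n
  map_smul' c x := by
    have h1 : c • x = algebraMap Fq M c * x := Algebra.smul_def c x
    have h2 : c • x ^ Fintype.card Fq = algebraMap Fq M c * x ^ Fintype.card Fq :=
      Algebra.smul_def c _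
    simp only [RingHom.id_apply, h1, h2, mul_pow, ← map_pow, FiniteField.pow_card]

variable (K : Type) [Field K] [Algebra Fq K]

/-- Multiplication by an element of the algebraic closure, as an `Fq`-linear endomorphism. -/
def lmul (x : AlgebraicClosure K) : Module.End Fq (AlgebraicClosure K) :=
  LinearMap.mulLeft Fq x

/-- `P` is the Ore polynomial `∑_{i ≤ n} c i τ^i` with coefficients in the algebraic
closure; coefficients above `n` are normalized to be `0`. -/
def OreRepB (P : Module.End Fq (AlgebraicClosure K)) (c : ℕ → AlgebraicClosure K)
    (n : ℕ) : Prop :=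
  P = ∑ i ∈ Finset.range (n + 1), lmul Fq K (c i) * (drinTau Fq (AlgebraicClosure K)) ^ i ∧
    ∀ i, n < i → c i = 0

/-- `P` is the Ore polynomial `∑_{i ≤ n} c i τ^i` with coefficients `c i ∈ K`. -/
def OreRep (P : Module.End Fq (AlgebraicClosure K)) (c : ℕ → K) (n : ℕ) : Prop :=
  OreRepB Fq K P (fun i => algebraMap K (AlgebraicClosure K) (c i)) n

/-- Membership in `K{τ}`: `P` is an Ore polynomial with coefficients in `K`. -/
def InOre (P : Module.End Fq (AlgebraicClosure K)) : Prop :=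
  ∃ n c, OreRep Fq K P c n

/-- Membership in `K̄{τ}`. -/
def InOreB (P : Module.End Fq (AlgebraicClosure K)) : Prop :=
  ∃ n c, OreRepB Fq K P c n

/-- `P` has `τ`-degree `n` (with coefficients in `K`). -/
def HasDeg (P : Module.End Fq (AlgebraicClosure K)) (n : ℕ) : Prop :=
  ∃ c, OreRep Fq K P c n ∧ c n ≠ 0

/-- `P` is monic of `τ`-degree `n`. -/
def MonicDeg (P : Module.End Fq (AlgebraicClosure K)) (n : ℕ) : Prop :=
  ∃ c, OreRep Fq K P c n ∧ c n = 1

def IsMonic (P : Module.End Fq (AlgebraicClosure K)) : Prop :=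
  ∃ n, MonicDeg Fq K P n

/-- `P` is separable: its coefficient of `τ^0` is nonzero. -/
def IsSep (P : Module.End Fq (AlgebraicClosure K)) : Prop :=
  ∃ n c, OreRep Fq K P c n ∧ c 0 ≠ 0

/-- `g` belongs to the left ideal of `K{τ}` generated by the set `S`. -/
def InLeftIdeal (S : Set (Module.End Fq (AlgebraicClosure K)))
    (g : Module.End Fq (AlgebraicClosure K)) : Prop :=
  ∃ (k : ℕ) (w u : Fin k → Module.End Fq (AlgebraicClosure K)),
    (∀ i, InOre Fq K (w i)) ∧ (∀ i, u i ∈ S) ∧ g = ∑ i, w i * u i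

/-- `g = rgcd(S)`: `g` is the monic generator of the left ideal of `K{τ}`
generated by `S`. -/
def IsRgcd (S : Set (Module.End Fq (AlgebraicClosure K)))
    (g : Module.End Fq (AlgebraicClosure K)) : Prop :=
  IsMonic Fq K g ∧ InLeftIdeal Fq K S g ∧ ∀ s ∈ S, ∃ w, InOre Fq K w ∧ s = w * g


/-- `φX` determines a rank-`r` Drinfeld `Fq[X]`-module over `K`:
`deg_τ(φX) = r` and the coefficient of `τ^0` of `φX` is `γ(X)`. -/
def IsDrinfeldFqX (γ : Polynomial Fq →ₐ[Fq] K) (r : ℕ)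
    (φX : Module.End Fq (AlgebraicClosure K)) : Prop :=
  ∃ c : ℕ → K, OreRep Fq K φX c r ∧ c r ≠ 0 ∧ c 0 = γ X

/-- The set `Hom(ψ, φ)` of morphisms between the Drinfeld modules determined by
`ψX` and `φX` : Ore polynomials `u ∈ K{τ}` with `u·ψX = φX·u`. -/
def HomSet (ψX φX : Module.End Fq (AlgebraicClosure K)) :
    Set (Module.End Fq (AlgebraicClosure K)) :=
  {u | InOre Fq K u ∧ u * ψX = φX * u}

/-- `τ_L := τ^{[L:Fq]}`, the Frobenius endomorphism of Drinfeld modules over `L`. -/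
def tauL (L : Type) [Field L] [Algebra Fq L] : Module.End Fq (AlgebraicClosure L) :=
  (drinTau Fq (AlgebraicClosure L)) ^ (Module.finrank Fq L)

/-- `Y² + h(X)·Y − f(X)` is the characteristic polynomial of the Frobenius endomorphism
of the rank-2 Drinfeld module determined by `φX`:
`τ_L² + φ_h·τ_L − φ_f = 0`, `deg f = [L:Fq]` and `deg h ≤ [L:Fq]/2`. -/
def IsCharPolyFrob (L : Type) [Field L] [Algebra Fq L]
    (φX : Module.End Fq (AlgebraicClosure L)) (h f : Polynomial Fq) : Prop :=
  tauL Fq L ^ 2 + Polynomial.aeval φX h * tauL Fq L - Polynomial.aeval φX f = 0 ∧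
    f.natDegree = Module.finrank Fq L ∧ h.natDegree ≤ Module.finrank Fq L / 2

/-- The plane curve `ξ := Y² + h(X)·Y − f(X)`, as an element of `Fq[X][Y]`
(the outer polynomial variable is `Y`). -/
def xiPoly (h f : Polynomial Fq) : Polynomial (Polynomial Fq) :=
  X ^ 2 + C h * X - C f

/-- `∂ξ/∂X = h'(X)·Y − f'(X)`. -/
def xiPolyDX (h f : Polynomial Fq) : Polynomial (Polynomial Fq) :=
  C (derivative h) * X - C (derivative f)

/-- The affine plane curve `ξ = 0` is smooth over `Fq`: `ξ`, `∂ξ/∂X` and `∂ξ/∂Y`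
generate the unit ideal of `Fq[X,Y]`. -/
def XiSmooth (h f : Polynomial Fq) : Prop :=
  Ideal.span {xiPoly Fq h f, xiPolyDX Fq h f, derivative (xiPoly Fq h f)} = ⊤

/-- The coordinate ring `A_H := Fq[X][Y]/(ξ)`. -/
abbrev AH (h f : Polynomial Fq) : Type :=
  Polynomial (Polynomial Fq) ⧸ Ideal.span {xiPoly Fq h f}

/-- The class `X̄` of `X` in `A_H`. -/
def XH (h f : Polynomial Fq) : AH Fq h f :=
  Ideal.Quotient.mk _ (C X)

/-- The class `Ȳ` of `Y` in `A_H`. -/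
def YH (h f : Polynomial Fq) : AH Fq h f :=
  Ideal.Quotient.mk _ X

/-!
An isogeny `ι ∈ L{τ}` commutes with `τ_L`, so applying it to the two Frobenius relations
`τ_L² + φ_h τ_L = φ_f` and `τ_L² + ψ_h' τ_L = ψ_f'` gives `ι (φ_{h-h'} τ_L - φ_{f-f'}) = 0`.
Elements of `L̄{τ}` act on `L̄` as additive polynomials, which are zero or surjective, so
`φ_{h-h'} τ_L = φ_{f-f'}`. The two sides have `τ`-degrees `2 deg (h-h') + [L:Fq]` and
`2 deg (f-f')`, of different parity, so `h = h'` and `f = f'`.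
An `L̄`-isomorphism `μ` then conjugates `φ_f = τ_L² + φ_h τ_L` into `ψ_f = τ_L² + ψ_h τ_L`. The
coefficient of `τ_L` in both is `γ(h)`, nonzero by ordinarity, and conjugation multiplies it by
`μ^(1-|L|)`; hence `μ^|L| = μ`, i.e. `μ ∈ L`.
-/

theorem Polynomial.coeff_one_comp {R : Type*} [CommSemiring R] (p q : R[X])
    (hq : q.coeff 0 = 0) : (p.comp q).coeff 1 = p.coeff 1 * q.coeff 1 := by
  have h1 (f : R[X]) : f.coeff 1 = (derivative f).eval 0 := by
    simp [← coeff_zero_eq_eval_zero, coeff_derivative]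
  rw [h1, h1, h1, derivative_comp, eval_mul, eval_comp, ← coeff_zero_eq_eval_zero q, hq, mul_comm]

section AdditivePolynomials

variable {R : Type*} [Semiring R] {b : ℕ} (c : ℕ → R) (n : ℕ)

theorem Polynomial.coeff_sum_C_mul_X_pow_pow (hb : 2 ≤ b) {j : ℕ} (hj : j ≤ n) :
    (∑ i ∈ range (n + 1), C (c i) * X ^ (b ^ i)).coeff (b ^ j) = c j := by
  simp only [finsetSum_coeff, coeff_C_mul_X_pow, (Nat.pow_right_injective hb).eq_iff,
    Finset.sum_ite_eq, mem_range, Nat.lt_succ_of_le hj, if_true]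

theorem Polynomial.coeff_zero_sum_C_mul_X_pow_pow (hb : b ≠ 0) :
    (∑ i ∈ range (n + 1), C (c i) * X ^ (b ^ i)).coeff 0 = 0 := by
  simp [(pow_pos (Nat.pos_of_ne_zero hb) _).ne]

theorem Polynomial.natDegree_sum_C_mul_X_pow_pow (hb : 2 ≤ b) (hc : c n ≠ 0) :
    (∑ i ∈ range (n + 1), C (c i) * X ^ (b ^ i)).natDegree = b ^ n := by
  refine natDegree_eq_of_le_of_coeff_ne_zero (natDegree_sum_le_of_forall_le _ _ fun i hi => ?_)
    (by rwa [coeff_sum_C_mul_X_pow_pow c n hb le_rfl])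
  exact (natDegree_C_mul_X_pow_le _ _).trans
    (Nat.pow_le_pow_right (by omega) (Nat.lt_succ_iff.mp (mem_range.mp hi)))

end AdditivePolynomials

theorem SemiconjBy.aeval_right {R A : Type*} [CommSemiring R] [Semiring A] [Algebra R A]
    {e x y : A} (h : SemiconjBy e x y) (p : R[X]) : SemiconjBy e (aeval x p) (aeval y p) := by
  simp only [SemiconjBy, aeval_eq_sum_range, Finset.mul_sum, Finset.sum_mul, mul_smul_comm,
    smul_mul_assoc, (h.pow_right _).eq]

theorem SemiconjBy.mul_aeval_sub_mul_eq {R A : Type*} [CommRing R] [Ring A] [Algebra R A]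
    {ι φ ψ T : A} {h f h' f' : R[X]} (hι : SemiconjBy ι φ ψ) (hT : Commute ι T)
    (hφ : T ^ 2 + aeval φ h * T = aeval φ f) (hψ : T ^ 2 + aeval ψ h' * T = aeval ψ f') :
    ι * (aeval φ (h - h') * T) = ι * aeval φ (f - f') := by
  have e : ι * aeval φ f' = ι * T ^ 2 + ι * aeval φ h' * T := by
    rw [(hι.aeval_right f').eq, ← hψ, add_mul, ← (hT.pow_right 2).eq, mul_assoc, ← hT.eq,
      ← mul_assoc, ← (hι.aeval_right h').eq]
  rw [map_sub, map_sub, mul_sub, e, ← hφ]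
  noncomm_ring

theorem FiniteField.mem_range_algebraMap_iff_pow_natCard_eq {K E : Type*} [Field K] [Finite K]
    [Field E] [Algebra K E] {x : E} : x ∈ (algebraMap K E).range ↔ x ^ Nat.card K = x := by
  constructor
  · rintro ⟨l, rfl⟩
    have := Fintype.ofFinite K
    rw [← map_pow, Nat.card_eq_fintype_card, FiniteField.pow_card]
  · intro hx
    refine (Polynomial.splits_X_pow_nat_card_sub_X (K := K)).mem_range_of_isRoot
      (FiniteField.X_pow_card_sub_X_ne_zero K Finite.one_lt_card) ?_
    simp [hx]

section PolynomialMaps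

variable {Fq : Type} [Field Fq] {E : Type} [Field E] [Algebra Fq E]

theorem drinTau_pow_apply [Fintype Fq] (i : ℕ) (x : E) :
    (drinTau Fq E ^ i) x = x ^ (Fintype.card Fq ^ i) := by
  induction i generalizing x with
  | zero => simp
  | succ n ih =>
    rw [pow_succ, Module.End.mul_apply, ih]
    change (x ^ _) ^ _ = _
    rw [← pow_mul, pow_succ']

def RepresentedBy (P : Module.End Fq E) (p : E[X]) : Prop :=
  ∀ x, P x = p.eval x

namespace RepresentedBy

variable {P Q : Module.End Fq E} {p r : E[X]}

theorem unique [Infinite E] (hp : RepresentedBy P p) (hr : RepresentedBy P r) : p = r :=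
  Polynomial.funext fun x => by rw [← hp x, ← hr x]

theorem zero : RepresentedBy (0 : Module.End Fq E) 0 := fun _ => by simp

theorem add (hP : RepresentedBy P p) (hQ : RepresentedBy Q r) : RepresentedBy (P + Q) (p + r) :=
  fun x => by rw [LinearMap.add_apply, hP, hQ, eval_add]

theorem sub (hP : RepresentedBy P p) (hQ : RepresentedBy Q r) : RepresentedBy (P - Q) (p - r) :=
  fun x => by rw [LinearMap.sub_apply, hP, hQ, eval_sub]

theorem mul (hP : RepresentedBy P p) (hQ : RepresentedBy Q r) : RepresentedBy (P * Q) (p.comp r) :=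
  fun x => by rw [Module.End.mul_apply, hQ, hP, eval_comp]

theorem drinTau_pow [Fintype Fq] (i : ℕ) :
    RepresentedBy (drinTau Fq E ^ i) (X ^ (Fintype.card Fq ^ i)) :=
  fun x => by rw [drinTau_pow_apply, eval_pow, eval_X]

theorem mul_drinTau_pow [Fintype Fq] (hP : RepresentedBy P p) (i : ℕ) :
    RepresentedBy (P * drinTau Fq E ^ i) (expand E (Fintype.card Fq ^ i) p) := by
  rw [expand_eq_comp_X_pow]
  exact hP.mul (drinTau_pow i)

theorem algebraMap_add (hP : RepresentedBy P p) (a : Fq) :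
    RepresentedBy (P + algebraMap Fq (Module.End Fq E) a) (p + C (algebraMap Fq E a) * X) :=
  fun x => by
    rw [LinearMap.add_apply, hP, Module.algebraMap_end_apply, Algebra.smul_def, eval_add,
      eval_mul, eval_C, eval_X]

/-- Over an algebraically closed field a polynomial map is constant or surjective. -/
theorem eq_zero_of_mul_eq_zero [IsAlgClosed E] {ι : Module.End Fq E} (hP : RepresentedBy P p)
    (hι : ι ≠ 0) (h : ι * P = 0) : P = 0 := by
  by_cases hp : p.natDegree = 0
  · rw [eq_C_of_natDegree_eq_zero hp] at hP
    have hc : p.coeff 0 = 0 := by simpa using (hP 0).symm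
    ext x
    simpa [hc] using hP x
  · refine absurd (LinearMap.ext fun y => ?_) hι
    obtain ⟨x, rfl⟩ := IsAlgClosed.eval_surjective hp y
    beta_reduce
    rw [LinearMap.zero_apply, ← hP, ← Module.End.mul_apply, h, LinearMap.zero_apply]

theorem exists_representedBy_aeval {χ : Module.End Fq E} {pχ : E[X]} (hχ : RepresentedBy χ pχ)
    (h0 : pχ.coeff 0 = 0) (hd : 1 < pχ.natDegree) (g : Fq[X]) :
    ∃ p : E[X], RepresentedBy (aeval χ g) p ∧ p.coeff 0 = 0 ∧ p.coeff 1 = aeval (pχ.coeff 1) g ∧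
      (g = 0 → p = 0) ∧ (g ≠ 0 → p.natDegree = pχ.natDegree ^ g.natDegree) := by
  induction g using Polynomial.recOnHorner with
  | M0 => exact ⟨0, by simpa using RepresentedBy.zero, by simp, by simp, fun _ => rfl, by simp⟩
  | MC g a hg0 ha ih =>
    obtain ⟨p, hp, hp0, hp1, hpz, hpd⟩ := ih
    have ha' : algebraMap Fq E a ≠ 0 := (map_ne_zero_iff _ (algebraMap Fq E).injective).mpr ha
    refine ⟨p + C (algebraMap Fq E a) * X, by simpa using hp.algebraMap_add a, by simp [hp0],
      by simp [hp1], fun h => absurd (by simpa [hg0] using congrArg (coeff · 0) h) ha,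
      fun _ => ?_⟩
    rw [natDegree_add_C]
    rcases eq_or_ne g 0 with rfl | hg
    · rw [hpz rfl, zero_add, natDegree_C_mul_X _ ha', natDegree_zero, pow_zero]
    · have hg1 : g.natDegree ≠ 0 := fun h => hg (by rw [eq_C_of_natDegree_eq_zero h, hg0, C_0])
      have hlt : (C (algebraMap Fq E a) * X).natDegree < p.natDegree := by
        rw [hpd hg, natDegree_C_mul_X _ ha']
        exact hd.trans_le (Nat.le_self_pow hg1 _)
      rw [natDegree_add_eq_left_of_natDegree_lt hlt, hpd hg]
  | MX g hg ih =>
    obtain ⟨p, hp, hp0, hp1, -, hpd⟩ := ih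
    refine ⟨p.comp pχ, by simpa using hp.mul hχ, ?_, ?_,
      fun h => absurd h (mul_ne_zero hg X_ne_zero), fun _ => ?_⟩
    · rw [coeff_zero_eq_eval_zero, eval_comp, ← coeff_zero_eq_eval_zero, h0,
        ← coeff_zero_eq_eval_zero, hp0]
    · rw [coeff_one_comp p pχ h0, hp1, map_mul, aeval_X]
    · rw [natDegree_comp, hpd hg, natDegree_mul_X hg, pow_succ]

end RepresentedBy

end PolynomialMaps

section DrinfeldModules

variable {Fq : Type} [Field Fq] {K : Type} [Field K] [Algebra Fq K]

theorem lmul_ne_zero {x : AlgebraicClosure K} (hx : x ≠ 0) : lmul Fq K x ≠ 0 :=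
  fun h => hx (by simpa [lmul] using LinearMap.congr_fun h 1)

theorem RepresentedBy.coeff_mul_pow_of_lmul_mul_eq {μ : AlgebraicClosure K}
    {A B : Module.End Fq (AlgebraicClosure K)} {a b : (AlgebraicClosure K)[X]}
    (hA : RepresentedBy A a) (hB : RepresentedBy B b) (h : lmul Fq K μ * A = B * lmul Fq K μ)
    (n : ℕ) : b.coeff n * μ ^ n = μ * a.coeff n := by
  have hcomp : b.comp (C μ * X) = C μ * a := Polynomial.funext fun x => by
    rw [eval_comp, eval_mul, eval_C, eval_X, eval_mul, eval_C, ← hB, ← hA]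
    exact (LinearMap.congr_fun h x).symm
  simpa using congrArg (coeff · n) hcomp

variable [Fintype Fq]

theorem inOre_lmul_algebraMap (a : K) : InOre Fq K (lmul Fq K (algebraMap K _ a)) :=
  ⟨0, fun i => if i = 0 then a else 0, by simp, fun i hi => by simp [hi.ne']⟩

theorem OreRepB.representedBy {P : Module.End Fq (AlgebraicClosure K)}
    {c : ℕ → AlgebraicClosure K} {n : ℕ} (h : OreRepB Fq K P c n) :
    RepresentedBy P (∑ i ∈ range (n + 1), C (c i) * X ^ (Fintype.card Fq ^ i)) := fun x => by
  rw [h.1, LinearMap.sum_apply, eval_finsetSum]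
  refine Finset.sum_congr rfl fun i _ => ?_
  rw [Module.End.mul_apply, drinTau_pow_apply, eval_mul, eval_C, eval_pow, eval_X]
  rfl

variable {γ : Fq[X] →ₐ[Fq] K} {r : ℕ} {φX : Module.End Fq (AlgebraicClosure K)}

theorem IsDrinfeldFqX.exists_representedBy (hφ : IsDrinfeldFqX Fq K γ r φX) :
    ∃ p : (AlgebraicClosure K)[X], RepresentedBy φX p ∧ p.coeff 0 = 0 ∧
      p.coeff 1 = algebraMap K _ (γ X) ∧ p.natDegree = Fintype.card Fq ^ r := by
  obtain ⟨c, hc, hcr, hc0⟩ := hφ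
  have hq : 2 ≤ Fintype.card Fq := Fintype.one_lt_card
  refine ⟨_, hc.representedBy, coeff_zero_sum_C_mul_X_pow_pow _ _ (by omega), ?_,
    natDegree_sum_C_mul_X_pow_pow _ _ hq ?_⟩
  · simpa [hc0] using
      coeff_sum_C_mul_X_pow_pow (fun i => algebraMap K (AlgebraicClosure K) (c i)) r hq r.zero_le
  · exact (map_ne_zero_iff _ (algebraMap K (AlgebraicClosure K)).injective).mpr hcr

theorem IsDrinfeldFqX.exists_representedBy_aeval (hφ : IsDrinfeldFqX Fq K γ r φX) (hr : 0 < r)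
    (g : Fq[X]) :
    ∃ p : (AlgebraicClosure K)[X], RepresentedBy (aeval φX g) p ∧
      p.coeff 1 = algebraMap K _ (γ g) ∧ (p = 0 ↔ g = 0) ∧
      (g ≠ 0 → p.natDegree = Fintype.card Fq ^ (r * g.natDegree)) := by
  obtain ⟨pφ, hpφ, h0, h1, hd⟩ := hφ.exists_representedBy
  have hd1 : 1 < pφ.natDegree := hd ▸ Nat.one_lt_pow hr.ne' Fintype.one_lt_card
  obtain ⟨p, hp, -, hp1, hpz, hpd⟩ := hpφ.exists_representedBy_aeval h0 hd1 g
  have hpd' (hg : g ≠ 0) : p.natDegree = Fintype.card Fq ^ (r * g.natDegree) := by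
    rw [hpd hg, hd, pow_mul]
  refine ⟨p, hp, ?_, ⟨fun hp0 => by_contra fun hg => by simpa [hp0] using (hpd' hg).symm, hpz⟩,
    hpd'⟩
  rw [hp1, h1, ← IsScalarTower.toAlgHom_apply Fq K, aeval_algHom_apply, aeval_algHom_apply,
    aeval_X_left_apply, IsScalarTower.toAlgHom_apply]

end DrinfeldModules

section Frobenius

variable {Fq : Type} [Field Fq] [Fintype Fq] {L : Type} [Field L] [Algebra Fq L]
  [FiniteDimensional Fq L]

theorem natCard_eq_card_pow_finrank : Nat.card L = Fintype.card Fq ^ Module.finrank Fq L := by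
  have := Module.finite_of_finite (R := Fq) (M := L)
  rw [Module.natCard_eq_pow_finrank (K := Fq), Nat.card_eq_fintype_card]

theorem tauL_apply (x : AlgebraicClosure L) : tauL Fq L x = x ^ Nat.card L := by
  rw [tauL, drinTau_pow_apply, natCard_eq_card_pow_finrank (Fq := Fq)]

theorem RepresentedBy.mul_tauL {P : Module.End Fq (AlgebraicClosure L)}
    {p : (AlgebraicClosure L)[X]} (hP : RepresentedBy P p) :
    RepresentedBy (P * tauL Fq L) (expand _ (Nat.card L) p) := by
  rw [natCard_eq_card_pow_finrank (Fq := Fq) (L := L)]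
  exact hP.mul_drinTau_pow _

theorem InOre.commute_tauL {ι : Module.End Fq (AlgebraicClosure L)} (hι : InOre Fq L ι) :
    Commute ι (tauL Fq L) := by
  have := Module.finite_of_finite (R := Fq) (M := L)
  have hfix (l : L) : algebraMap L (AlgebraicClosure L) l ^ Nat.card L = algebraMap L _ l :=
    FiniteField.mem_range_algebraMap_iff_pow_natCard_eq.mp ⟨l, rfl⟩
  obtain ⟨n, c, hrep, -⟩ := hι
  ext x
  rw [Module.End.mul_apply, Module.End.mul_apply, hrep, LinearMap.sum_apply, LinearMap.sum_apply,
    map_sum]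
  refine Finset.sum_congr rfl fun i _ => ?_
  simp only [Module.End.mul_apply, drinTau_pow_apply, tauL_apply, lmul, LinearMap.mulLeft_apply]
  rw [mul_pow, hfix, ← pow_mul, ← pow_mul, Nat.mul_comm]

variable {γ : Fq[X] →ₐ[Fq] L} {r : ℕ} {φX ψX : Module.End Fq (AlgebraicClosure L)}

/-- Compare `τ`-degrees: `r·deg g + [L:Fq]` on the left, `r·deg f` on the right. -/
theorem IsDrinfeldFqX.eq_zero_of_aeval_mul_tauL_eq (hφ : IsDrinfeldFqX Fq L γ r φX) (hr : 0 < r)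
    (hm : ¬ r ∣ Module.finrank Fq L) {g f : Fq[X]}
    (h : aeval φX g * tauL Fq L = aeval φX f) : g = 0 ∧ f = 0 := by
  obtain ⟨pg, hpg, -, hpgz, hpgd⟩ := hφ.exists_representedBy_aeval hr g
  obtain ⟨pf, hpf, -, hpfz, hpfd⟩ := hφ.exists_representedBy_aeval hr f
  have := Module.finite_of_finite (R := Fq) (M := L)
  have hexp : expand _ (Nat.card L) pg = pf := hpg.mul_tauL.unique (h ▸ hpf)
  have hg : g = 0 := by
    by_contra hg
    have hf : f ≠ 0 := fun hf => by
      rw [hpfz.mpr hf, expand_eq_zero Nat.card_pos] at hexp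
      exact hg (hpgz.mp hexp)
    have hdeg := congrArg natDegree hexp
    rw [natDegree_expand, hpgd hg, hpfd hf, natCard_eq_card_pow_finrank (Fq := Fq), ← pow_add]
      at hdeg
    have := Nat.pow_right_injective Fintype.one_lt_card hdeg
    exact hm ⟨f.natDegree - g.natDegree, by rw [Nat.mul_sub]; omega⟩
  refine ⟨hg, hpfz.mp ?_⟩
  rw [← hexp, hpgz.mpr hg, map_zero]

theorem IsCharPolyFrob.eq_of_isogeny (hφ : IsDrinfeldFqX Fq L γ r φX) (hr : 0 < r)
    (hm : ¬ r ∣ Module.finrank Fq L) {hA fA hB fB : Fq[X]} (hcpφ : IsCharPolyFrob Fq L φX hA fA)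
    (hcpψ : IsCharPolyFrob Fq L ψX hB fB) {ι : Module.End Fq (AlgebraicClosure L)} (hι0 : ι ≠ 0)
    (hιOre : InOre Fq L ι) (hι : ι * φX = ψX * ι) : hA = hB ∧ fA = fB := by
  have hW : ι * (aeval φX (hA - hB) * tauL Fq L - aeval φX (fA - fB)) = 0 := by
    rw [mul_sub, sub_eq_zero]
    exact SemiconjBy.mul_aeval_sub_mul_eq hι hιOre.commute_tauL (sub_eq_zero.mp hcpφ.1)
      (sub_eq_zero.mp hcpψ.1)
  obtain ⟨pg, hpg, -⟩ := hφ.exists_representedBy_aeval hr (hA - hB)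
  obtain ⟨pf, hpf, -⟩ := hφ.exists_representedBy_aeval hr (fA - fB)
  have hW0 := (hpg.mul_tauL.sub hpf).eq_zero_of_mul_eq_zero hι0 hW
  simpa only [sub_eq_zero] using hφ.eq_zero_of_aeval_mul_tauL_eq hr hm (sub_eq_zero.mp hW0)

/-- The coefficient of `τ_L` in `φ_f = τ_L² + φ_h τ_L` is the constant term `γ(h)` of `φ_h`. -/
theorem IsCharPolyFrob.exists_representedBy_coeff_natCard {h f : Fq[X]}
    (hφ : IsDrinfeldFqX Fq L γ r φX) (hr : 0 < r) (hcp : IsCharPolyFrob Fq L φX h f) :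
    ∃ p : (AlgebraicClosure L)[X], RepresentedBy (aeval φX f) p ∧
      p.coeff (Nat.card L) = algebraMap L _ (γ h) := by
  have := Module.finite_of_finite (R := Fq) (M := L)
  obtain ⟨ph, hph, hph1, -⟩ := hφ.exists_representedBy_aeval hr h
  have hT : RepresentedBy (tauL Fq L) (X ^ Nat.card L) := fun x => by
    rw [tauL_apply, eval_pow, eval_X]
  refine ⟨_, sub_eq_zero.mp hcp.1 ▸ (sq (tauL Fq L) ▸ hT.mul hT).add hph.mul_tauL, ?_⟩
  have hN : 1 < Nat.card L := Finite.one_lt_card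
  rw [coeff_add, pow_comp, X_comp, ← pow_mul, coeff_X_pow, if_neg (by nlinarith), zero_add,
    ← hph1]
  simpa using coeff_expand_mul' (R := AlgebraicClosure L) (by omega) ph 1

theorem IsCharPolyFrob.pow_natCard_eq_of_lmul_mul_eq {h f : Fq[X]}
    (hφ : IsDrinfeldFqX Fq L γ r φX) (hψ : IsDrinfeldFqX Fq L γ r ψX) (hr : 0 < r)
    (hcpφ : IsCharPolyFrob Fq L φX h f) (hcpψ : IsCharPolyFrob Fq L ψX h f) (hγh : γ h ≠ 0) {μ : AlgebraicClosure L}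
    (hμ : lmul Fq L μ * φX = ψX * lmul Fq L μ) : μ ^ Nat.card L = μ := by
  obtain ⟨a, ha, haN⟩ := hcpφ.exists_representedBy_coeff_natCard hφ hr
  obtain ⟨b, hb, hbN⟩ := hcpψ.exists_representedBy_coeff_natCard hψ hr
  have := ha.coeff_mul_pow_of_lmul_mul_eq hb (SemiconjBy.aeval_right hμ f).eq (Nat.card L)
  rw [haN, hbN, mul_comm μ] at this
  exact mul_left_cancel₀ ((_root_.map_ne_zero _).mpr hγh) this

end Frobenius

theorem statement2_general
    (Fq : Type) [Field Fq] [Fintype Fq]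
    (L : Type) [Field L] [Algebra Fq L] [FiniteDimensional Fq L]
    (p : Polynomial Fq)
    (γ : Polynomial Fq →ₐ[Fq] L) (hker : RingHom.ker γ = Ideal.span {p})
    (hodd : Odd (Module.finrank Fq L))
    (φX ψX : Module.End Fq (AlgebraicClosure L))
    (hφ : IsDrinfeldFqX Fq L γ 2 φX) (hψ : IsDrinfeldFqX Fq L γ 2 ψX)
    (hA fA hB fB : Polynomial Fq)
    (hcpφ : IsCharPolyFrob Fq L φX hA fA) (hordφ : ¬ p ∣ hA)
    (hcpψ : IsCharPolyFrob Fq L ψX hB fB) :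
    (∃ lam : L, lam ≠ 0 ∧
        lmul Fq L (algebraMap L (AlgebraicClosure L) lam) * φX =
          ψX * lmul Fq L (algebraMap L (AlgebraicClosure L) lam)) ↔
      ((∃ ι, ι ≠ 0 ∧ InOre Fq L ι ∧ ι * φX = ψX * ι) ∧
        ∃ mu : AlgebraicClosure L, mu ≠ 0 ∧
          lmul Fq L mu * φX = ψX * lmul Fq L mu) := by
  constructor
  · rintro ⟨lam, hlam0, hlam⟩
    have hmu0 : algebraMap L (AlgebraicClosure L) lam ≠ 0 := (_root_.map_ne_zero _).mpr hlam0
    exact ⟨⟨_, lmul_ne_zero hmu0, inOre_lmul_algebraMap lam, hlam⟩, _, hmu0, hlam⟩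
  · rintro ⟨⟨ι, hι0, hιOre, hι⟩, mu, hmu0, hmu⟩
    obtain ⟨rfl, rfl⟩ := hcpφ.eq_of_isogeny hφ two_pos hodd.not_two_dvd_nat hcpψ hι0 hιOre hι
    have hγ : γ hA ≠ 0 := fun h =>
      hordφ (Ideal.mem_span_singleton.mp (hker ▸ RingHom.mem_ker.mpr h))
    have := Module.finite_of_finite (R := Fq) (M := L)
    obtain ⟨lam, rfl⟩ := FiniteField.mem_range_algebraMap_iff_pow_natCard_eq.mpr
      (hcpφ.pow_natCard_eq_of_lmul_mul_eq hφ hψ two_pos hcpψ hγ hmu)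
    exact ⟨lam, fun h => hmu0 (by rw [h, map_zero]), hmu⟩

/-- Assume `[L:Fq]` odd, and let `φ`, `ψ` be ordinary rank-2 Drinfeld
`Fq[X]`-modules over `L` whose characteristic polynomials of the Frobenius endomorphism
define smooth affine plane curves. Then `φ` and `ψ` are `L`-isomorphic iff they are
`L`-isogenous and `L̄`-isomorphic. -/
theorem statement2
    (Fq : Type) [Field Fq] [Fintype Fq]
    (L : Type) [Field L] [Algebra Fq L] [FiniteDimensional Fq L]
    (p : Polynomial Fq) (hpm : p.Monic) (hpirr : Irreducible p)
    (γ : Polynomial Fq →ₐ[Fq] L) (hker : RingHom.ker γ = Ideal.span {p})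
    (hodd : Odd (Module.finrank Fq L))
    (φX ψX : Module.End Fq (AlgebraicClosure L))
    (hφ : IsDrinfeldFqX Fq L γ 2 φX) (hψ : IsDrinfeldFqX Fq L γ 2 ψX)
    (hA fA hB fB : Polynomial Fq)
    (hcpφ : IsCharPolyFrob Fq L φX hA fA) (hordφ : ¬ p ∣ hA)
    (hsmoothφ : XiSmooth Fq hA fA)
    (hcpψ : IsCharPolyFrob Fq L ψX hB fB) (hordψ : ¬ p ∣ hB)
    (hsmoothψ : XiSmooth Fq hB fB) :
    (∃ lam : L, lam ≠ 0 ∧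
        lmul Fq L (algebraMap L (AlgebraicClosure L) lam) * φX =
          ψX * lmul Fq L (algebraMap L (AlgebraicClosure L) lam)) ↔
      ((∃ ι, ι ≠ 0 ∧ InOre Fq L ι ∧ ι * φX = ψX * ι) ∧
        ∃ mu : AlgebraicClosure L, mu ≠ 0 ∧
          lmul Fq L mu * φX = ψX * lmul Fq L mu) :=
  statement2_general Fq L p γ hker hodd φX ψX hφ hψ hA fA hB fB hcpφ hordφ hcpψ

end
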